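/- Little Second Incompleteness Theorem (Gödel's version): let T be a consistent, computably enumerable theory correctly representing every computable function. Then there exists a weak provability predicate Prb for T (i.e., Prb(⌜A⌝) is true in ℕ iff T ⊢ A, and T ⊢ A implies T ⊢ Prb(⌜A⌝)) such that T does not prove Con := ¬∃x, Prb(x) ∧ Prb(⌜¬⌝ ⌢ x). Concretely one may take Prb(x) := Prb_G(x) ∨ ¬G, where G is a Gödel sentence for the standard provability predicate Prb_G. -/

import Mathlib

open FirstOrder FirstOrder.Language

/-- Function symbols of the language of arithmetic `{0, S, +, ×}`. -/
inductive ArithFunc : ℕ → Type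
  | zero : ArithFunc 0
  | succ : ArithFunc 1
  | add : ArithFunc 2
  | mul : ArithFunc 2

/-- The first-order language of arithmetic. -/
def L : Language := ⟨ArithFunc, fun _ => Empty⟩

/-- The term `0`. -/
def zeroT {α : Type} : L.Term α := Constants.term ArithFunc.zero

/-- The term `S t`. -/
def succT {α : Type} (t : L.Term α) : L.Term α := Functions.apply₁ ArithFunc.succ t

/-- The term `s + t`. -/
def addT {α : Type} (s t : L.Term α) : L.Term α := Functions.apply₂ ArithFunc.add s t

/-- The term `s × t`. -/
def mulT {α : Type} (s t : L.Term α) : L.Term α := Functions.apply₂ ArithFunc.mul s t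

/-- The numeral `n̄ = S … S 0`. -/
def num {α : Type} : ℕ → L.Term α
  | 0 => zeroT
  | n + 1 => succT (num n)

/-- The `i`-th bounded variable as a term. -/
def v {α : Type} {n : ℕ} (i : Fin n) : L.Term (α ⊕ Fin n) := Term.var (Sum.inr i)

/-- The ordering `s < t := ∃ z, S z + s = t`. -/
def ltF {α : Type} {n : ℕ} (s t : L.Term (α ⊕ Fin n)) : L.BoundedFormula α n :=
  BoundedFormula.ex
    (Term.bdEqual
      (addT (succT (Term.var (Sum.inr (Fin.last n)))) (s.relabel (Sum.map id Fin.castSucc)))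
      (t.relabel (Sum.map id Fin.castSucc)))

/-- Axiom S0 : `∀ x, ¬ S x = 0`. -/
def axS0 : L.Sentence := ∀' ∼(Term.bdEqual (succT (v 0)) zeroT)

/-- Axiom S1 : `∀ x y, S x = S y → x = y`. -/
def axS1 : L.Sentence := ∀' ∀' (Term.bdEqual (succT (v 0)) (succT (v 1)) ⟹ Term.bdEqual (v 0) (v 1))

/-- Axiom S2 : `∀ x, x = 0 ∨ ∃ y, S y = x`. -/
def axS2 : L.Sentence := ∀' (Term.bdEqual (v 0) zeroT ⊔ ∃' (Term.bdEqual (succT (v 1)) (v 0)))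

/-- Axiom A0 : `∀ x, x + 0 = x`. -/
def axA0 : L.Sentence := ∀' (Term.bdEqual (addT (v 0) zeroT) (v 0))

/-- Axiom A1 : `∀ x y, x + S y = S (x + y)`. -/
def axA1 : L.Sentence := ∀' ∀' (Term.bdEqual (addT (v 0) (succT (v 1))) (succT (addT (v 0) (v 1))))

/-- Axiom M0 : `∀ x, x × 0 = 0`. -/
def axM0 : L.Sentence := ∀' (Term.bdEqual (mulT (v 0) zeroT) zeroT)

/-- Axiom M1 : `∀ x y, x × S y = x + (x × y)`. -/
def axM1 : L.Sentence := ∀' ∀' (Term.bdEqual (mulT (v 0) (succT (v 1))) (addT (v 0) (mulT (v 0) (v 1))))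

/-- Robinson Arithmetic. -/
def Q : L.Theory := {axS0, axS1, axS2, axA0, axA1, axM0, axM1}

/-- The induction axiom for the formula `φ` with one (bounded) variable:
`(φ(0) ∧ ∀ x, φ(x) → φ(S x)) → ∀ x, φ(x)`. -/
def indAx (φ : L.BoundedFormula Empty 1) : L.Sentence :=
  ((∀' (Term.bdEqual (v 0) zeroT ⟹ φ)) ⊓
      ∀' (φ ⟹ ∀' (Term.bdEqual (v 1) (succT (v 0)) ⟹ φ.liftAt 1 0))) ⟹ ∀' φ

/-- Peano Arithmetic: Robinson arithmetic plus the induction schema. -/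
def PA : L.Theory := Q ∪ Set.range indAx

/-- `∃! y, ψ(y)`, for `ψ` with one bounded variable. -/
def exUnique (ψ : L.BoundedFormula Empty 1) : L.Sentence :=
  ∃' (ψ ⊓ ∀' (ψ.liftAt 1 0 ⟹ Term.bdEqual (v 1) (v 0)))

/-- `φ(x̄⃗, ȳ)`: the result of substituting the numerals of `xs` and `y` for the
free variables of `φ`. -/
def appNum {α : Type} (φ : L.Formula (α ⊕ Fin 1)) (xs : α → ℕ) (y : ℕ) : L.Sentence :=
  φ.subst (Sum.elim (fun i => num (xs i)) (fun _ => num y))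

/-- `φ(x̄⃗, y)` with the numerals of `xs` substituted for the input variables and the
output variable `y` left as a bounded variable. -/
def outFormula {α : Type} (φ : L.Formula (α ⊕ Fin 1)) (xs : α → ℕ) : L.BoundedFormula Empty 1 :=
  (BoundedFormula.relabel (β := α) (n := 1)
      (Sum.elim (fun i => Sum.inl i) (fun _ => Sum.inr 0)) φ).subst (fun i => num (xs i))

/-- `f` is represented in `T` by the formula `φ`: whenever `f xs = y`, the theory `T` proves
`(∃! y, φ(x̄⃗, y)) ∧ φ(x̄⃗, ȳ)`. -/
def RepresentsBy (T : L.Theory) {α : Type} (f : (α → ℕ) → ℕ) (φ : L.Formula (α ⊕ Fin 1)) : Prop :=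
  ∀ (xs : α → ℕ) (y : ℕ), f xs = y →
    T ⊨ᵇ (exUnique (outFormula φ xs) ⊓ appNum φ xs y : L.Sentence)

/-- `f` is representable in `T`. -/
def Represents (T : L.Theory) {α : Type} (f : (α → ℕ) → ℕ) : Prop :=
  ∃ φ : L.Formula (α ⊕ Fin 1), RepresentsBy T f φ

instance : Encodable (Σ n, L.Functions n) where
  encode x := match x with
    | ⟨_, ArithFunc.zero⟩ => 0
    | ⟨_, ArithFunc.succ⟩ => 1
    | ⟨_, ArithFunc.add⟩ => 2
    | ⟨_, ArithFunc.mul⟩ => 3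
  decode n := match n with
    | 0 => some ⟨0, ArithFunc.zero⟩
    | 1 => some ⟨1, ArithFunc.succ⟩
    | 2 => some ⟨2, ArithFunc.add⟩
    | 3 => some ⟨2, ArithFunc.mul⟩
    | _ => none
  encodek := by rintro ⟨n, f⟩; cases f <;> rfl

instance : Encodable (Σ n, L.Relations n) where
  encode x := x.2.elim
  decode _ := none
  encodek x := x.2.elim

/-- A fixed effective Gödel coding of sentences as natural numbers. -/
def code (A : L.Sentence) : ℕ := Encodable.encode A.listEncode

/-- `P(n̄)` : the predicate `P` applied to the numeral of `n`. -/
def papp (P : L.Formula (Fin 1)) (m : ℕ) : L.Sentence := P.subst (fun _ => num m)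

/-- `P(⌜A⌝)` : the predicate `P` applied to the numeral of the code of the sentence `A`. -/
def pcode (P : L.Formula (Fin 1)) (A : L.Sentence) : L.Sentence := papp P (code A)

/-- The standard model `ℕ` of the language of arithmetic. -/
instance : L.Structure ℕ where
  funMap f := match f with
    | ArithFunc.zero => fun _ => 0
    | ArithFunc.succ => fun x => x 0 + 1
    | ArithFunc.add => fun x => x 0 + x 1
    | ArithFunc.mul => fun x => x 0 * x 1
  RelMap r := r.elim

/-- Consistency of a theory: it does not prove both a sentence and its negation. -/
def Consistent (T : L.Theory) : Prop := ¬ ∃ A : L.Sentence, T ⊨ᵇ A ∧ T ⊨ᵇ (∼A : L.Sentence)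

/-- A theory is computably enumerable: the set of codes of its theorems is c.e. -/
def TheoryCE (T : L.Theory) : Prop :=
  REPred fun n : ℕ => ∃ A : L.Sentence, code A = n ∧ T ⊨ᵇ A

/-- The consistency statement `¬ ∃ x, Prb(x) ∧ Prb(⌜¬⌝ ⌢ x)`, phrased with a formula `Neg`
representing the concatenation function `x ↦ ⌜¬⌝ ⌢ x` (negation on codes). -/
def ConSent (Prb : L.Formula (Fin 1)) (Neg : L.Formula (Fin 1 ⊕ Fin 1)) : L.Sentence :=
  ∼(∃' ∃' ((BoundedFormula.relabel (β := Empty) (n := 2)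
        (Sum.elim (fun _ => Sum.inr (0 : Fin 2)) (fun _ => Sum.inr (1 : Fin 2))) Neg) ⊓
      (BoundedFormula.relabel (β := Empty) (n := 2) (fun _ => Sum.inr (0 : Fin 2)) Prb) ⊓
      (BoundedFormula.relabel (β := Empty) (n := 2) (fun _ => Sum.inr (1 : Fin 2)) Prb)))

/-- `f` is correctly represented in `T` by `φ`: `φ` represents `f` and moreover
`φ(x̄⃗, ȳ)` is true in the standard model iff `f xs = y`. -/
def CRepresentsBy (T : L.Theory) {α : Type} (f : (α → ℕ) → ℕ)
    (φ : L.Formula (α ⊕ Fin 1)) : Prop :=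
  RepresentsBy T f φ ∧ ∀ (xs : α → ℕ) (y : ℕ), ((ℕ ⊨ appNum φ xs y) ↔ f xs = y)

/-! ### Syntactic encoding: the numeral-substitution function on codes -/

open Encodable List

/-- The list of element-codes of the numeral `num m` (over `Empty ⊕ Fin k`). -/
def numListCode : ℕ → List ℕ
  | 0 => [1]
  | m + 1 => 3 :: numListCode m

/-- Numeric substitution inside an (encoded) term: replace the free-variable entry `0`
by the code of the numeral. -/
def subTermElem (m u : ℕ) : List ℕ := if u = 0 then numListCode m else [u]

/-- Numeric substitution on an element of an encoded formula list. -/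
def subElem (m e : ℕ) : ℕ :=
  if e % 2 = 0 then
    2 * Nat.pair (e / 2).unpair.1
      (Encodable.encode
        (((Denumerable.ofNat (List ℕ) (e / 2).unpair.2).flatMap (subTermElem m))))
  else e

/-- Numeric version of `fun B m => code (papp B m)`. -/
def subNum (b m : ℕ) : ℕ :=
  Encodable.encode ((Denumerable.ofNat (List ℕ) b).map (subElem m))

theorem encode_list_map_encode {X : Type*} [Encodable X] (l : List X) :
    encode l = encode (l.map encode) := by
  induction l with
  | nil => rfl
  | cons a l ih => simp [ih]

theorem num_relabel {α β : Type} (h : α → β) (m : ℕ) :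
    (num m : L.Term α).relabel h = num m := by
  induction m with
  | zero =>
    simp only [num, zeroT, Constants.term, Term.relabel]
    congr 1
    exact funext fun i => i.elim0
  | succ m ih =>
    simp only [num, succT, Functions.apply₁, Term.relabel]
    congr 1
    funext i
    fin_cases i
    exact ih

theorem listEncode_subst_term {α β : Type} (g : α → L.Term β) (t : L.Term α) :
    (t.subst g).listEncode
      = t.listEncode.flatMap (Sum.elim (fun a => (g a).listEncode) fun f => [Sum.inr f]) := by
  induction t with
  | var a => simp [Term.subst, Term.listEncode]
  | func f ts ih =>
    simp only [Term.subst, Term.listEncode, flatMap_cons, Sum.elim_inr, flatMap_assoc,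
      cons_append, nil_append, ih]

/-- The substitution map used by `BoundedFormula.subst` for `papp · m`. -/
def numSubst (m : ℕ) {k : ℕ} : (Fin 1 ⊕ Fin k) → L.Term (Empty ⊕ Fin k) :=
  Sum.elim (Term.relabel Sum.inl ∘ fun _ : Fin 1 => (num m : L.Term Empty))
    (Term.var ∘ Sum.inr)

theorem listEncode_subst {α β : Type} (f : α → L.Term β) :
    ∀ {n : ℕ} (φ : L.BoundedFormula α n),
      (φ.subst f).listEncode = φ.listEncode.map
        (Sum.map (fun p : Σ k, L.Term (α ⊕ Fin k) =>
            (⟨p.1, p.2.subst (Sum.elim (Term.relabel Sum.inl ∘ f) (Term.var ∘ Sum.inr))⟩ :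
              Σ k, L.Term (β ⊕ Fin k))) id) := by
  intro n φ
  induction φ with
  | falsum => rfl
  | equal t₁ t₂ => rfl
  | rel R ts => exact R.elim
  | imp φ₁ φ₂ ih₁ ih₂ =>
    show ((φ₁.subst f).imp (φ₂.subst f)).listEncode = _
    simp only [BoundedFormula.listEncode, List.map_append, List.map_cons, Sum.map_inr, id,
      ih₁, ih₂]
  | all φ ih =>
    show ((φ.subst f).all).listEncode = _
    simp only [BoundedFormula.listEncode, List.map_cons, Sum.map_inr, id, ih]

theorem map_encode_listEncode_num (k m : ℕ) :
    ((num m : L.Term (Empty ⊕ Fin k)).listEncode).map encode = numListCode m := by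
  induction m with
  | zero => rfl
  | succ m ih =>
    show (Term.listEncode (Term.func ArithFunc.succ ![num m])).map encode = _
    simp only [Term.listEncode, List.finRange_succ, List.finRange_zero, List.flatMap_cons,
      List.flatMap_nil, List.append_nil, List.map_cons, List.map_nil, numListCode,
      Matrix.cons_val_zero]
    rw [← ih]
    rfl

theorem subTermElem_correct (m : ℕ) {k : ℕ} (u : (Fin 1 ⊕ Fin k) ⊕ (Σ i, L.Functions i)) :
    subTermElem m (encode u)
      = (Sum.elim (fun a => (numSubst m a : L.Term (Empty ⊕ Fin k)).listEncode)
          (fun f => [Sum.inr f]) u).map encode := by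
  rcases u with (a | f)
  · rcases a with (i | j)
    · have hi : i = 0 := Subsingleton.elim _ _
      subst hi
      have h0 : encode (Sum.inl (Sum.inl (0 : Fin 1)) :
          (Fin 1 ⊕ Fin k) ⊕ (Σ i, L.Functions i)) = 0 := rfl
      rw [h0]
      have : (numSubst m (Sum.inl (0 : Fin 1)) : L.Term (Empty ⊕ Fin k)) = num m := by
        simp only [numSubst, Sum.elim_inl, Function.comp_apply]
        exact num_relabel _ _
      simp [subTermElem, this, map_encode_listEncode_num]
  -- bound variable case
    · have h : encode (Sum.inl (Sum.inr j) : (Fin 1 ⊕ Fin k) ⊕ (Σ i, L.Functions i))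
          = 2 * (2 * encode j + 1) := rfl
      have hne : encode (Sum.inl (Sum.inr j) : (Fin 1 ⊕ Fin k) ⊕ (Σ i, L.Functions i)) ≠ 0 := by
        rw [h]; omega
      simp only [subTermElem, if_neg hne, Sum.elim_inl, numSubst, Function.comp_apply,
        Term.listEncode, List.map_cons, List.map_nil]
      rfl
  · have hne : encode (Sum.inr f : (Fin 1 ⊕ Fin k) ⊕ (Σ i, L.Functions i)) ≠ 0 := by
      have h : encode (Sum.inr f : (Fin 1 ⊕ Fin k) ⊕ (Σ i, L.Functions i))
          = 2 * encode f + 1 := rfl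
      rw [h]; omega
    simp only [subTermElem, if_neg hne, Sum.elim_inr, List.map_cons, List.map_nil]
    rfl

theorem subElem_correct (m : ℕ)
    (e : (Σ k, L.Term (Fin 1 ⊕ Fin k)) ⊕ ((Σ n, L.Relations n) ⊕ ℕ)) :
    subElem m (encode e)
      = encode (Sum.map (fun p : Σ k, L.Term (Fin 1 ⊕ Fin k) =>
          (⟨p.1, p.2.subst (numSubst m)⟩ : Σ k, L.Term (Empty ⊕ Fin k))) id e) := by
  rcases e with (⟨k, t⟩ | z)
  · have h : encode (Sum.inl ⟨k, t⟩ : (Σ k, L.Term (Fin 1 ⊕ Fin k)) ⊕ ((Σ n, L.Relations n) ⊕ ℕ))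
        = 2 * Nat.pair k (encode t.listEncode) := rfl
    rw [h]
    have hmod : (2 * Nat.pair k (encode t.listEncode)) % 2 = 0 := Nat.mul_mod_right 2 _
    have hdiv : (2 * Nat.pair k (encode t.listEncode)) / 2 = Nat.pair k (encode t.listEncode) :=
      Nat.mul_div_cancel_left _ (by norm_num)
    simp only [subElem, hmod, if_pos rfl, hdiv, Nat.unpair_pair]
    rw [encode_list_map_encode t.listEncode, Denumerable.ofNat_encode]
    have hflat : (t.listEncode.map encode).flatMap (subTermElem m)
        = ((t.subst (numSubst m)).listEncode).map encode := by
      rw [List.flatMap_map, listEncode_subst_term (numSubst m) t, List.map_flatMap]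
      exact List.flatMap_congr (fun u _ => subTermElem_correct m u)
    rw [hflat, ← encode_list_map_encode]
    rfl
  · have hne : (encode (Sum.inr z : (Σ k, L.Term (Fin 1 ⊕ Fin k)) ⊕ ((Σ n, L.Relations n) ⊕ ℕ)))
        % 2 ≠ 0 := by
      have h : encode (Sum.inr z : (Σ k, L.Term (Fin 1 ⊕ Fin k)) ⊕ ((Σ n, L.Relations n) ⊕ ℕ))
          = 2 * encode z + 1 := rfl
      rw [h]; omega
    simp only [subElem, if_neg hne]
    rfl

theorem subNum_correct (B : L.Formula (Fin 1)) (m : ℕ) :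
    subNum (encode B.listEncode) m = code (papp B m) := by
  unfold subNum code papp
  calc encode ((Denumerable.ofNat (List ℕ) (encode B.listEncode)).map (subElem m))
      = encode (B.listEncode.map (fun e => subElem m (encode e))) := by
        rw [encode_list_map_encode B.listEncode, Denumerable.ofNat_encode, List.map_map]
        rfl
    _ = encode (B.listEncode.map (fun e =>
          encode (Sum.map (fun p : Σ k, L.Term (Fin 1 ⊕ Fin k) =>
            (⟨p.1, p.2.subst (numSubst m)⟩ : Σ k, L.Term (Empty ⊕ Fin k))) id e))) := by
        congr 1
        exact List.map_congr_left (fun e _ => subElem_correct m e)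
    _ = encode ((B.listEncode.map (Sum.map (fun p : Σ k, L.Term (Fin 1 ⊕ Fin k) =>
            (⟨p.1, p.2.subst (numSubst m)⟩ : Σ k, L.Term (Empty ⊕ Fin k))) id)).map encode) := by
        rw [List.map_map]
        rfl
    _ = encode (B.listEncode.map (Sum.map (fun p : Σ k, L.Term (Fin 1 ⊕ Fin k) =>
            (⟨p.1, p.2.subst (numSubst m)⟩ : Σ k, L.Term (Empty ⊕ Fin k))) id)) :=
        (encode_list_map_encode _).symm
    _ = encode (BoundedFormula.listEncode
          (B.subst (fun _ : Fin 1 => (num m : L.Term Empty)))) := by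
        rw [listEncode_subst (fun _ : Fin 1 => (num m : L.Term Empty)) B]
        rfl

/-! ### Computability of the numeric substitution -/

theorem primrec_numListCode : Primrec numListCode := by
  have : numListCode = fun m => Nat.rec [1] (fun _ ih => 3 :: ih) m := by
    funext m; induction m with
    | zero => rfl
    | succ m ih => simp only [numListCode, ih]
  rw [this]
  exact Primrec.nat_rec₁ _ ((Primrec.list_cons.comp (Primrec.const 3) Primrec.snd).to₂)

theorem primrec_subTermElem : Primrec₂ subTermElem := by
  unfold subTermElem
  exact Primrec.ite (Primrec.eq.comp Primrec.snd (Primrec.const 0))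
    (primrec_numListCode.comp Primrec.fst)
    (Primrec.list_cons.comp Primrec.snd (Primrec.const []))

theorem primrec_subElem : Primrec₂ subElem := by
  unfold subElem
  have h1 : Primrec₂ fun (m e : ℕ) => (e / 2).unpair.1 :=
    (Primrec.fst.comp <| Primrec.unpair.comp <|
      (Primrec.nat_div.comp Primrec.snd (Primrec.const 2)).to₂).to₂
  have h2 : Primrec₂ fun (m e : ℕ) =>
      Encodable.encode ((Denumerable.ofNat (List ℕ) (e / 2).unpair.2).flatMap (subTermElem m)) :=
    (Primrec.encode.comp <|
      Primrec.list_flatMap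
        ((Primrec.ofNat (List ℕ)).comp <| Primrec.snd.comp <| Primrec.unpair.comp <|
          Primrec.nat_div.comp Primrec.snd (Primrec.const 2))
        ((primrec_subTermElem.comp (Primrec.fst.comp Primrec.fst) Primrec.snd).to₂)).to₂
  exact Primrec.ite
    (Primrec.eq.comp (Primrec.nat_mod.comp Primrec.snd (Primrec.const 2)) (Primrec.const 0))
    (Primrec.nat_mul.comp (Primrec.const 2) (Primrec₂.natPair.comp h1 h2))
    Primrec.snd

theorem primrec_subNum : Primrec₂ subNum := by
  unfold subNum
  exact (Primrec.encode.comp <|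
    Primrec.list_map ((Primrec.ofNat (List ℕ)).comp Primrec.fst)
      ((primrec_subElem.comp (Primrec.snd.comp Primrec.fst) Primrec.snd).to₂)).to₂

theorem computable_dfun : Computable fun w : Fin 1 → ℕ => subNum (w 0) (w 0) := by
  have h0 : Primrec fun w : Fin 1 → ℕ => w 0 :=
    Primrec.fin_app.comp Primrec.id (Primrec.const 0)
  exact (primrec_subNum.comp h0 h0).to_comp

/-! ### From computable enumerability to a computable verifier -/

theorem ce_exists_g {p : ℕ → Prop} (hce : REPred p) :
    ∃ g : (Fin 2 → ℕ) → ℕ, Computable g ∧ ∀ n : ℕ, p n ↔ ∃ k, g ![k, n] = 1 := by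
  unfold REPred at hce
  obtain ⟨c, hc⟩ := Nat.Partrec.Code.exists_code.1 hce
  refine ⟨fun w => if (Nat.Partrec.Code.evaln (w 0) c (w 1)).isSome then 1 else 0, ?_, ?_⟩
  · have h0 : Primrec fun w : Fin 2 → ℕ => w 0 :=
      Primrec.fin_app.comp Primrec.id (Primrec.const 0)
    have h1 : Primrec fun w : Fin 2 → ℕ => w 1 :=
      Primrec.fin_app.comp Primrec.id (Primrec.const 1)
    have he : Primrec fun w : Fin 2 → ℕ => (Nat.Partrec.Code.evaln (w 0) c (w 1)) :=
      Nat.Partrec.Code.primrec_evaln.comp ((h0.pair (Primrec.const c)).pair h1)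
    exact (Primrec.ite (Primrec.eq.comp (Primrec.option_isSome.comp he) (Primrec.const true))
      (Primrec.const 1) (Primrec.const 0)).to_comp
  · intro n
    have hdom : p n ↔ (Nat.Partrec.Code.eval c n).Dom := by
      have h := congrFun hc n
      rw [h]
      show p n ↔ (((Encodable.decode (α := ℕ) n : Option ℕ) : Part ℕ).bind fun a =>
        Part.map Encodable.encode (Part.assert (p a) fun _ => Part.some ())).Dom
      have hdec : (Encodable.decode (α := ℕ) n : Option ℕ) = some n := rfl
      rw [hdec, Part.coe_some, Part.bind_dom]
      simp [Part.assert]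
    rw [hdom]
    constructor
    · intro hd
      obtain ⟨x, hx⟩ := Part.dom_iff_mem.1 hd
      obtain ⟨k, hk⟩ := Nat.Partrec.Code.evaln_complete.1 hx
      refine ⟨k, ?_⟩
      have : (Nat.Partrec.Code.evaln k c n).isSome := by
        rw [Option.isSome_iff_exists]; exact ⟨x, hk⟩
      simp only [Matrix.cons_val_zero, Matrix.cons_val_one, Matrix.head_cons, this, if_true]
    · rintro ⟨k, hk⟩
      simp only [Matrix.cons_val_zero, Matrix.cons_val_one, Matrix.head_cons] at hk
      by_cases hs : (Nat.Partrec.Code.evaln k c n).isSome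
      · obtain ⟨x, hx⟩ := Option.isSome_iff_exists.1 hs
        exact Part.dom_iff_mem.2 ⟨x, Nat.Partrec.Code.evaln_complete.2 ⟨k, hx⟩⟩
      · simp [hs] at hk

/-! ### Semantics of numerals and of the constructed formulas -/

/-- The standard value of a numeral in a structure. -/
def stdVal (M : Type*) [L.Structure M] : ℕ → M
  | 0 => Structure.funMap (L := L) ArithFunc.zero ![]
  | n + 1 => Structure.funMap (L := L) ArithFunc.succ ![stdVal M n]

theorem stdVal_nat (n : ℕ) : stdVal ℕ n = n := by
  induction n with
  | zero => rfl
  | succ n ih =>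
    show Structure.funMap (L := L) ArithFunc.succ ![stdVal ℕ n] = n + 1
    rw [ih]
    rfl

theorem realize_num {M : Type*} [L.Structure M] {α : Type} (vv : α → M) (n : ℕ) :
    (num n : L.Term α).realize vv = stdVal M n := by
  induction n with
  | zero =>
    show Term.realize vv (Term.func (L := L) ArithFunc.zero _) = _
    show Structure.funMap (L := L) ArithFunc.zero _ = Structure.funMap (L := L) ArithFunc.zero ![]
    congr 1
    exact funext fun i => i.elim0
  | succ n ih =>
    show Term.realize vv (Term.func (L := L) ArithFunc.succ ![num n]) = _
    show Structure.funMap (L := L) ArithFunc.succ _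
        = Structure.funMap (L := L) ArithFunc.succ ![stdVal M n]
    congr 1
    funext i
    fin_cases i
    exact ih

theorem realize_appNum {M : Type*} [L.Structure M] {α : Type} (φ : L.Formula (α ⊕ Fin 1))
    (xs : α → ℕ) (y : ℕ) :
    (M ⊨ appNum φ xs y) ↔
      φ.Realize (Sum.elim (fun i => stdVal M (xs i)) fun _ : Fin 1 => stdVal M y) := by
  show BoundedFormula.Realize (M := M) (appNum φ xs y) default default ↔ _
  unfold appNum
  rw [BoundedFormula.realize_subst]
  have : (fun a => (Sum.elim (fun i => (num (xs i) : L.Term Empty)) (fun _ => num y) a).realize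
      (default : Empty → M)) = Sum.elim (fun i => stdVal M (xs i)) fun _ : Fin 1 => stdVal M y := by
    funext a
    rcases a with (i | j) <;> simp [realize_num]
  rw [this]
  exact Iff.rfl

theorem realize_papp {M : Type*} [L.Structure M] (P : L.Formula (Fin 1)) (m : ℕ) :
    (M ⊨ papp P m) ↔ P.Realize (fun _ : Fin 1 => stdVal M m) := by
  show BoundedFormula.Realize (M := M) (papp P m) default default ↔ _
  unfold papp
  rw [BoundedFormula.realize_subst]
  have : (fun a : Fin 1 => ((fun _ : Fin 1 => (num m : L.Term Empty)) a).realize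
      (default : Empty → M)) = fun _ : Fin 1 => stdVal M m := by
    funext a; simp [realize_num]
  rw [this]
  exact Iff.rfl

/-- `∃ k, φ(k, x, 1̄)`. -/
def trF (φ : L.Formula (Fin 2 ⊕ Fin 1)) : L.Formula (Fin 1) :=
  BoundedFormula.ex (BoundedFormula.relabel (![Sum.inr 0, Sum.inl 0] : Fin 2 → Fin 1 ⊕ Fin 1)
    (φ.subst (Sum.elim (fun i : Fin 2 => Term.var i) (fun _ : Fin 1 => num 1))))

theorem realize_trF {M : Type*} [L.Structure M] (φ : L.Formula (Fin 2 ⊕ Fin 1))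
    (vv : Fin 1 → M) :
    (trF φ).Realize vv ↔
      ∃ a : M, φ.Realize (Sum.elim ![a, vv 0] fun _ : Fin 1 => stdVal M 1) := by
  unfold trF
  show BoundedFormula.Realize _ vv default ↔ _
  rw [BoundedFormula.realize_ex]
  refine exists_congr fun a => ?_
  rw [BoundedFormula.realize_relabel, BoundedFormula.realize_subst]
  apply Iff.of_eq
  congr 1
  · funext p
    rcases p with (i | j)
    · simp only [Sum.elim_inl]
      fin_cases i <;> simp [Fin.snoc, realize_num] <;> rfl
    · simp [realize_num]
  · exact Subsingleton.elim _ _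

/-- `B(x) := ∃ y, Dia(x, y) ∧ ¬ Tr(y)`. -/
def diagF (Tr : L.Formula (Fin 1)) (Dia : L.Formula (Fin 1 ⊕ Fin 1)) : L.Formula (Fin 1) :=
  BoundedFormula.ex
    ((BoundedFormula.relabel (![Sum.inl 0, Sum.inr 0] : Fin 2 → Fin 1 ⊕ Fin 1)
        (Dia.subst (Sum.elim (fun _ : Fin 1 => (Term.var 0 : L.Term (Fin 2)))
          (fun _ : Fin 1 => Term.var 1)))) ⊓
      ∼(BoundedFormula.relabel (fun _ : Fin 1 => Sum.inr (0 : Fin 1)) Tr))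

theorem realize_diagF {M : Type*} [L.Structure M] (Tr : L.Formula (Fin 1))
    (Dia : L.Formula (Fin 1 ⊕ Fin 1)) (vv : Fin 1 → M) :
    (diagF Tr Dia).Realize vv ↔
      ∃ b : M, Dia.Realize (Sum.elim (fun _ : Fin 1 => vv 0) fun _ : Fin 1 => b) ∧
        ¬ Tr.Realize (fun _ : Fin 1 => b) := by
  unfold diagF
  show BoundedFormula.Realize _ vv default ↔ _
  rw [BoundedFormula.realize_ex]
  refine exists_congr fun b => ?_
  rw [BoundedFormula.realize_inf, BoundedFormula.realize_not, BoundedFormula.realize_relabel,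
    BoundedFormula.realize_relabel, BoundedFormula.realize_subst]
  apply and_congr
  · apply Iff.of_eq
    congr 1
    · funext p
      rcases p with (i | j)
      · simp only [Sum.elim_inl]
        fin_cases i
        simp [Fin.snoc]
      · simp only [Sum.elim_inr]
        fin_cases j
        simp [Fin.snoc]
    · exact Subsingleton.elim _ _
  · apply not_congr
    apply Iff.of_eq
    congr 1
    all_goals
      first
      | exact Subsingleton.elim _ _
      | (funext i; fin_cases i; simp [Fin.snoc])

/-! ### Miscellaneous bridging lemmas -/

theorem realize_appNum_nat {α : Type} (φ : L.Formula (α ⊕ Fin 1)) (xs : α → ℕ) (y : ℕ) :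
    (ℕ ⊨ appNum φ xs y) ↔ φ.Realize (Sum.elim xs fun _ : Fin 1 => y) := by
  rw [realize_appNum]
  simp only [stdVal_nat]

theorem realize_papp_nat (P : L.Formula (Fin 1)) (m : ℕ) :
    (ℕ ⊨ papp P m) ↔ P.Realize (fun _ : Fin 1 => m) := by
  rw [realize_papp]
  simp only [stdVal_nat]

theorem code_inj {A B : L.Sentence} (h : code A = code B) : A = B := by
  unfold code at h
  have h2 := Encodable.encode_injective h
  have h3 := BoundedFormula.listEncode_sigma_injective (α := Empty) (L := L)
    (show ((⟨0, A⟩ : Σ n, L.BoundedFormula Empty n)).2.listEncode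
        = ((⟨0, B⟩ : Σ n, L.BoundedFormula Empty n)).2.listEncode from h2)
  exact eq_of_heq (Sigma.mk.inj_iff.mp h3).2

theorem trF_models {T : L.Theory} {g : (Fin 2 → ℕ) → ℕ} {φg : L.Formula (Fin 2 ⊕ Fin 1)}
    (hr : RepresentsBy T g φg) {k n : ℕ} (hk : g ![k, n] = 1) :
    T ⊨ᵇ papp (trF φg) n := by
  have h := hr ![k, n] 1 hk
  rw [Theory.models_sentence_iff] at h ⊢
  intro M
  have h2 := h M
  have h3 : M ⊨ appNum φg ![k, n] 1 := (BoundedFormula.realize_inf.1 h2).2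
  rw [realize_papp, realize_trF]
  refine ⟨stdVal M k, ?_⟩
  have h4 := (realize_appNum φg ![k, n] 1).1 h3
  have hfun : (Sum.elim (![stdVal M k, stdVal M n] : Fin 2 → M) fun _ : Fin 1 => stdVal M 1)
      = Sum.elim (fun i => stdVal M (![k, n] i)) fun _ : Fin 1 => stdVal M 1 := by
    funext p
    rcases p with (i | j)
    · fin_cases i <;> simp
    · simp
  show BoundedFormula.Realize φg _ _
  rw [show (Sum.elim ![stdVal M k, (fun _ : Fin 1 => stdVal M n) 0]
      fun _ : Fin 1 => stdVal M 1 : Fin 2 ⊕ Fin 1 → M)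
      = Sum.elim (fun i => stdVal M (![k, n] i)) fun _ : Fin 1 => stdVal M 1 from hfun]
  exact h4

theorem realize_conSent {M : Type*} [L.Structure M] (Prb : L.Formula (Fin 1))
    (Neg : L.Formula (Fin 1 ⊕ Fin 1)) :
    (M ⊨ ConSent Prb Neg) ↔
      ¬ ∃ a b : M, (Neg.Realize (Sum.elim (fun _ : Fin 1 => a) fun _ : Fin 1 => b) ∧
        Prb.Realize (fun _ : Fin 1 => a)) ∧ Prb.Realize (fun _ : Fin 1 => b) := by
  show BoundedFormula.Realize (M := M) (ConSent Prb Neg) default default ↔ _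
  unfold ConSent
  rw [BoundedFormula.realize_not, BoundedFormula.realize_ex]
  apply not_congr
  refine exists_congr fun a => ?_
  rw [BoundedFormula.realize_ex]
  refine exists_congr fun b => ?_
  rw [BoundedFormula.realize_inf, BoundedFormula.realize_inf, BoundedFormula.realize_relabel,
    BoundedFormula.realize_relabel, BoundedFormula.realize_relabel]
  apply and_congr
  apply and_congr
  all_goals
    apply Iff.of_eq
    congr 1
    all_goals
      first
      | exact Subsingleton.elim _ _
      | (funext p; first
          | (rcases p with (i | j)
             · fin_cases i <;> simp [Fin.snoc]
             · fin_cases j <;> simp [Fin.snoc])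
          | (fin_cases p <;> simp [Fin.snoc]))
/-- The Little Second Incompleteness Theorem (Gödel's version): a consistent, computably
enumerable theory correctly representing every computable function has a weak provability
predicate `Prb` whose consistency statement `¬ ∃ x, Prb(x) ∧ Prb(⌜¬⌝ ⌢ x)` it cannot
prove. -/
theorem little_second_incompleteness_goedel (T : L.Theory) (hcons : Consistent T)
    (hce : TheoryCE T)
    (hrep : ∀ (k : ℕ) (f : (Fin k → ℕ) → ℕ), Computable f →
      ∃ φ : L.Formula (Fin k ⊕ Fin 1), CRepresentsBy T f φ)
    (negc : ℕ → ℕ)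
    (hnegc : ∀ A : L.Sentence, negc (code A) = code (∼A : L.Sentence))
    (Neg : L.Formula (Fin 1 ⊕ Fin 1))
    (hNeg : CRepresentsBy T (fun w : Fin 1 → ℕ => negc (w 0)) Neg) :
    ∃ Prb : L.Formula (Fin 1),
      (∀ A : L.Sentence, ((ℕ ⊨ pcode Prb A) ↔ T ⊨ᵇ A)) ∧
      (∀ A : L.Sentence, T ⊨ᵇ A → T ⊨ᵇ pcode Prb A) ∧
      ¬ T ⊨ᵇ ConSent Prb Neg := by
  classical
  obtain ⟨g, hgc, hg⟩ := ce_exists_g hce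
  obtain ⟨φg, hφg⟩ := hrep 2 g hgc
  -- the standard provability predicate
  set E : L.Formula (Fin 1) := trF φg with hE
  -- truth condition for `E`
  have htrue : ∀ n : ℕ, (ℕ ⊨ papp E n) ↔ ∃ A : L.Sentence, code A = n ∧ T ⊨ᵇ A := by
    intro n
    rw [realize_papp_nat, hE, realize_trF, hg n]
    refine exists_congr fun k => ?_
    have h2 := (realize_appNum_nat φg ![k, n] 1).symm.trans (hφg.2 ![k, n] 1)
    rw [← h2]
    simp only [stdVal_nat]
  -- provability condition for `E`
  have hprov : ∀ A : L.Sentence, T ⊨ᵇ A → T ⊨ᵇ papp E (code A) := by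
    intro A hA
    obtain ⟨k, hk⟩ := (hg (code A)).1 ⟨A, rfl, hA⟩
    exact trF_models hφg.1 hk
  have hThm : ∀ A : L.Sentence, (∃ A', code A' = code A ∧ T ⊨ᵇ A') ↔ T ⊨ᵇ A := by
    intro A
    constructor
    · rintro ⟨A', h1, h2⟩
      rwa [code_inj h1] at h2
    · intro h; exact ⟨A, rfl, h⟩
  -- Lemma A: there is a true unprovable sentence
  have hLemA : ∃ ψ : L.Sentence, (ℕ ⊨ ψ) ∧ ¬ T ⊨ᵇ ψ := by
    by_contra hno
    push_neg at hno
    have hiff : ∀ A : L.Sentence, (T ⊨ᵇ A) ↔ (ℕ ⊨ A) := by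
      intro A
      constructor
      · intro hTA
        by_contra hnA
        have hnot : ℕ ⊨ (∼A : L.Sentence) := fun h => hnA h
        exact hcons ⟨A, hTA, hno _ hnot⟩
      · exact hno A
    obtain ⟨Dia, hDia⟩ := hrep 1 (fun w : Fin 1 → ℕ => subNum (w 0) (w 0)) computable_dfun
    set B : L.Formula (Fin 1) := diagF E Dia with hB
    set m₀ : ℕ := Encodable.encode (BoundedFormula.listEncode B) with hm
    set G : L.Sentence := papp B m₀ with hG
    have hDiaR : ∀ x y : ℕ,
        Dia.Realize (Sum.elim (fun _ : Fin 1 => x) fun _ : Fin 1 => (y : ℕ)) ↔ subNum x x = y := by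
      intro x y
      have h2 := (realize_appNum_nat Dia ![x] y).symm.trans (hDia.2 ![x] y)
      simp only [Matrix.cons_val_zero] at h2
      rw [← h2]
      apply Iff.of_eq
      congr 1
      funext p
      rcases p with (i | j)
      · fin_cases i; simp
      · simp
    have hsub : subNum m₀ m₀ = code G := subNum_correct B m₀
    have h1 : (ℕ ⊨ G) ↔ ¬ (ℕ ⊨ papp E (code G)) := by
      rw [hG, realize_papp_nat, realize_papp_nat, realize_diagF]
      constructor
      · rintro ⟨b, hb1, hb2⟩
        have hb : subNum m₀ m₀ = b := (hDiaR m₀ b).1 hb1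
        rw [hsub] at hb
        rwa [← hb] at hb2
      · intro hnot
        exact ⟨(code G : ℕ), (hDiaR m₀ (code G)).2 hsub, hnot⟩
    have h2 : (ℕ ⊨ papp E (code G)) ↔ (ℕ ⊨ G) := by
      rw [htrue (code G), hThm G, hiff G]
    rw [h2] at h1
    exact iff_not_self h1
  obtain ⟨ψ, hψtrue, hψnp⟩ := hLemA
  -- the weak provability predicate
  set Prb : L.Formula (Fin 1) :=
    E ⊔ Formula.relabel (fun e : Empty => e.elim) (∼ψ) with hPrb
  have hrelabel : ∀ (M : Type) [L.Structure M] (vv : Fin 1 → M),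
      (Formula.relabel (fun e : Empty => e.elim) (∼ψ : L.Sentence)).Realize vv ↔ ¬ M ⊨ ψ := by
    intro M _ vv
    rw [Formula.realize_relabel, Formula.realize_not]
    apply not_congr
    apply Iff.of_eq
    congr 1
    exact Subsingleton.elim _ _
  refine ⟨Prb, ?_, ?_, ?_⟩
  · -- condition 1
    intro A
    show (ℕ ⊨ papp Prb (code A)) ↔ _
    rw [realize_papp_nat, hPrb, Formula.realize_sup, hrelabel ℕ]
    have hE1 : (E.Realize fun _ : Fin 1 => (code A : ℕ)) ↔ T ⊨ᵇ A := by
      rw [← realize_papp_nat, htrue (code A), hThm A]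
    rw [hE1]
    simp [hψtrue]
  · -- condition 2
    intro A hA
    have h := hprov A hA
    show T ⊨ᵇ papp Prb (code A)
    rw [Theory.models_sentence_iff] at h ⊢
    intro M
    have h2 := h M
    rw [realize_papp] at h2 ⊢
    rw [hPrb, Formula.realize_sup]
    exact Or.inl h2
  · -- condition 3
    intro hcon
    apply hψnp
    rw [Theory.models_sentence_iff]
    intro M
    by_contra hMψ
    have hPrbAll : ∀ c : M, Prb.Realize (fun _ : Fin 1 => c) := by
      intro c
      rw [hPrb, Formula.realize_sup]
      exact Or.inr ((hrelabel M (fun _ => c)).2 hMψ)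
    have hNegT := (hNeg.1 ![code (⊥ : L.Sentence)] (negc (code (⊥ : L.Sentence))) rfl)
    rw [Theory.models_sentence_iff] at hNegT
    have hNegM : M ⊨ appNum Neg ![code (⊥ : L.Sentence)] (negc (code (⊥ : L.Sentence))) :=
      (BoundedFormula.realize_inf.1 (hNegT M)).2
    rw [realize_appNum] at hNegM
    have hcon2 := (realize_conSent Prb Neg).1 ((Theory.models_sentence_iff.1 hcon) M)
    apply hcon2
    refine ⟨stdVal M (code (⊥ : L.Sentence)), stdVal M (negc (code (⊥ : L.Sentence))),
      ⟨?_, hPrbAll _⟩, hPrbAll _⟩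
    have hfun : (Sum.elim (fun i => stdVal M ((![code (⊥ : L.Sentence)] : Fin 1 → ℕ) i))
        fun _ : Fin 1 => stdVal M (negc (code (⊥ : L.Sentence))) : Fin 1 ⊕ Fin 1 → M)
        = Sum.elim (fun _ : Fin 1 => stdVal M (code (⊥ : L.Sentence)))
            fun _ : Fin 1 => stdVal M (negc (code (⊥ : L.Sentence))) := by
      funext p
      rcases p with (i | j)
      · fin_cases i; simp
      · simp
    rwa [hfun] at hNegM
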